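/- Let H be a graph on n vertices with onion decomposition J^(0) ⊊ J^(1) ⊊ ··· ⊊ J^(M). For any q ∈ [0,1), let t be the index such that |J^(t)|/|H| ≤ q < |J^(t+1)|/|H|. Then φ_q = n^(−|V(J^(t+1))\V(J^(t))| / |J^(t+1)\J^(t)|) = n^(−1/ρ(J^(t+1)|J^(t))); that is, the pair (S, J) = (J^(t), J^(t+1)) is a minimax optimal pair in the definition of φ_q. -/
import Mathlib


open Filter
open scoped ENNReal

noncomputable section

/-- The edge set of the complete graph `K_n` on the vertex set `Fin n`
(the non-diagonal elements of `Sym2 (Fin n)`). -/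
def edgeFinset (n : ℕ) : Finset (Sym2 (Fin n)) :=
  Finset.univ.filter fun e => ¬ e.IsDiag

open Classical in
/-- The vertex set `V(J)` of a graph `J` identified with its edge set:
the vertices incident to at least one edge of `J`. -/
def vertexSet {n : ℕ} (J : Finset (Sym2 (Fin n))) : Finset (Fin n) :=
  Finset.univ.filter fun v => ∃ e ∈ J, v ∈ e

/-- The graph-cut density `ρ(J|S) = |J \ S| / |V(J) \ V(S)|`, with the
convention that it equals `+∞` when `V(J) \ V(S) = ∅` (in particular when
`V(J) = V(S)`). -/
def rho {n : ℕ} (J S : Finset (Sym2 (Fin n))) : ℝ≥0∞ :=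
  if vertexSet J \ vertexSet S = ∅ then ⊤
  else ((J \ S).card : ℝ≥0∞) / (((vertexSet J \ vertexSet S).card : ℝ≥0∞))

/-- The quantity `n ^ (−|V(J)\V(S)| / |J\S|)` (real exponentiation). -/
def phiTerm (n : ℕ) (J S : Finset (Sym2 (Fin n))) : ℝ :=
  (n : ℝ) ^ (-(((vertexSet J \ vertexSet S).card : ℝ) / (((J \ S).card : ℝ))))

/-- The `q`-modified subgraph expectation threshold
`φ_q = min { max { n^(−|V(J)\V(S)|/|J\S|) : S ⊊ J ⊆ H } : S ⊆ H, |S| ≤ q·|H| }`. -/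
def phi (n : ℕ) (H : Finset (Sym2 (Fin n))) (q : ℝ) : ℝ :=
  sInf {x : ℝ | ∃ S : Finset (Sym2 (Fin n)), S ⊆ H ∧ (S.card : ℝ) ≤ q * (H.card : ℝ) ∧
    x = sSup {y : ℝ | ∃ J : Finset (Sym2 (Fin n)), S ⊂ J ∧ J ⊆ H ∧ y = phiTerm n J S}}

/-- The planted copy `H* = σ(H)` of `H` under the vertex permutation `σ`. -/
def plantedCopy {n : ℕ} (H : Finset (Sym2 (Fin n))) (σ : Equiv.Perm (Fin n)) :
    Finset (Sym2 (Fin n)) :=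
  H.image (Sym2.map ⇑σ)

/-- The Bayes risk (unnormalized mean squared error) of the estimator `f` in the planted
subgraph model: the planted copy `H* = σ(H)` is drawn via a uniform permutation `σ`, the
noise `G₀ ~ G(n,p)` includes each edge of `K_n` independently with probability `p`, and
the observation is `G = H* ∪ G₀`. -/
def risk (n : ℕ) (H : Finset (Sym2 (Fin n))) (p : ℝ)
    (f : Finset (Sym2 (Fin n)) → Sym2 (Fin n) → ℝ) : ℝ :=
  ∑ σ : Equiv.Perm (Fin n), ∑ G₀ ∈ (edgeFinset n).powerset,
    ((n.factorial : ℝ))⁻¹ * p ^ G₀.card * (1 - p) ^ ((edgeFinset n).card - G₀.card) *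
      ∑ e ∈ edgeFinset n,
        ((if e ∈ plantedCopy H σ then (1 : ℝ) else 0) - f (plantedCopy H σ ∪ G₀) e) ^ 2

/-- The normalized minimum mean squared error `MMSE_n(p)` of the planted subgraph model:
the infimum over all estimators of the Bayes risk, normalized by the number of edges of `H`. -/
def MMSE (n : ℕ) (H : Finset (Sym2 (Fin n))) (p : ℝ) : ℝ :=
  ((H.card : ℝ))⁻¹ * sInf (Set.range (risk n H p))

/-- A sequence of graphs `H = H_n` is weakly dense if
`|H_n| / (v(H_n)·log v(H_n)) → ∞`, i.e. its liminf is `+∞`. -/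
def WeaklyDense (H : (n : ℕ) → Finset (Sym2 (Fin n))) : Prop :=
  Tendsto (fun n => ((H n).card : ℝ) /
      (((vertexSet (H n)).card : ℝ) * Real.log ((vertexSet (H n)).card : ℝ)))
    atTop atTop

/-- `J 0 = ∅ ⊊ J 1 ⊊ ⋯ ⊊ J M = H` is the onion decomposition of `H`: at each step,
`J (t+1)` is a maximal element of `argmax { ρ(J' | J t) : J t ⊊ J' ⊆ H }`. -/
def IsOnionDecomp (n : ℕ) (H : Finset (Sym2 (Fin n))) (M : ℕ)
    (J : ℕ → Finset (Sym2 (Fin n))) : Prop :=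
  J 0 = ∅ ∧ J M = H ∧
  ∀ t, t < M →
    J t ⊂ J (t + 1) ∧ J (t + 1) ⊆ H ∧
    (∀ J', J t ⊂ J' → J' ⊆ H → rho J' (J t) ≤ rho (J (t + 1)) (J t)) ∧
    (∀ J', J t ⊂ J' → J' ⊆ H → rho (J (t + 1)) (J t) ≤ rho J' (J t) → ¬ J (t + 1) ⊂ J')



/-- `fdivAux a b = a / b` in `ℝ≥0∞`, with `fdivAux a 0 = ⊤`. -/
noncomputable def fdivAux (a b : ℕ) : ℝ≥0∞ := if b = 0 then ⊤ else (a : ℝ≥0∞) / b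

lemma fdivAux_ne_top {a b : ℕ} (hb : b ≠ 0) : fdivAux a b ≠ ⊤ := by
  simp [fdivAux, hb, ENNReal.div_eq_top]

lemma fdivAux_le_fdivAux_iff {a₁ b₁ a₂ b₂ : ℕ} (h1 : b₁ ≠ 0) (h2 : b₂ ≠ 0) :
    fdivAux a₁ b₁ ≤ fdivAux a₂ b₂ ↔ a₁ * b₂ ≤ a₂ * b₁ := by
  have hb1 : (b₁ : ℝ≥0∞) ≠ 0 := by exact_mod_cast h1
  have hb2 : (b₂ : ℝ≥0∞) ≠ 0 := by exact_mod_cast h2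
  rw [fdivAux, fdivAux, if_neg h1, if_neg h2, ENNReal.div_le_iff hb1 (by simp),
    mul_comm, mul_div_assoc', ENNReal.le_div_iff_mul_le (Or.inl hb2) (by simp)]
  rw [show ((b₁:ℝ≥0∞) * a₂) = ((b₁ * a₂ : ℕ) : ℝ≥0∞) by push_cast; ring]
  rw [show ((a₁:ℝ≥0∞) * b₂) = ((a₁ * b₂ : ℕ) : ℝ≥0∞) by push_cast; ring]
  rw [Nat.cast_le, mul_comm b₁ a₂]

lemma fdivAux_anti {a b₁ b₂ : ℕ} (h : b₁ ≤ b₂) : fdivAux a b₂ ≤ fdivAux a b₁ := by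
  rcases Nat.eq_zero_or_pos b₁ with h1 | h1
  · simp [h1, fdivAux]
  rcases Nat.eq_zero_or_pos b₂ with h2 | h2
  · omega
  rw [fdivAux_le_fdivAux_iff (by omega) (by omega)]
  exact Nat.mul_le_mul_left a h

lemma medAux1 {n1 n2 d1 d2 : ℕ} (hn1 : 1 ≤ n1) (hn2 : 1 ≤ n2)
    (h : fdivAux n1 d1 ≤ fdivAux (n1 + n2) (d1 + d2)) :
    fdivAux (n1 + n2) (d1 + d2) ≤ fdivAux n2 d2 := by
  rcases Nat.eq_zero_or_pos d2 with h2 | h2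
  · simp [h2, fdivAux, le_top]
  rcases Nat.eq_zero_or_pos d1 with hd1 | hd1
  · subst hd1
    rw [show fdivAux n1 0 = ⊤ by simp [fdivAux], top_le_iff] at h
    exact absurd h (fdivAux_ne_top (by omega))
  rw [fdivAux_le_fdivAux_iff (by omega) (by omega)] at h ⊢
  nlinarith

lemma medAux2 {n1 n2 d1 d2 : ℕ} (hn1 : 1 ≤ n1) (hn2 : 1 ≤ n2)
    (h : fdivAux (n1 + n2) (d1 + d2) ≤ fdivAux n1 d1) :
    fdivAux n2 d2 ≤ fdivAux n1 d1 := by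
  rcases Nat.eq_zero_or_pos d1 with hd1 | hd1
  · simp [hd1, fdivAux, le_top]
  rcases Nat.eq_zero_or_pos d2 with h2 | h2
  · subst h2
    rw [fdivAux_le_fdivAux_iff (by omega) (by omega)] at h
    nlinarith
  rw [fdivAux_le_fdivAux_iff (by omega) (by omega)] at h ⊢
  nlinarith

lemma rho_eq_fdivAux {n : ℕ} (J S : Finset (Sym2 (Fin n))) :
    rho J S = fdivAux (J \ S).card ((vertexSet J \ vertexSet S).card) := by
  rw [rho, fdivAux]
  by_cases h : vertexSet J \ vertexSet S = ∅ <;>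
    simp [h, Finset.card_eq_zero]

lemma vertexSet_mono {n : ℕ} {J J' : Finset (Sym2 (Fin n))} (h : J ⊆ J') :
    vertexSet J ⊆ vertexSet J' := by
  classical
  intro v hv
  simp only [vertexSet, Finset.mem_filter, Finset.mem_univ, true_and] at hv ⊢
  obtain ⟨e, he, hve⟩ := hv
  exact ⟨e, h he, hve⟩

lemma vertexSet_union {n : ℕ} (S K : Finset (Sym2 (Fin n))) :
    vertexSet (S ∪ K) = vertexSet S ∪ vertexSet K := by
  classical
  ext v
  simp only [vertexSet, Finset.mem_filter, Finset.mem_univ, true_and, Finset.mem_union]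
  aesop

lemma card_sdiff_chain {α : Type*} [DecidableEq α] {A B C : Finset α}
    (hAB : A ⊆ B) (hBC : B ⊆ C) : (B \ A).card + (C \ B).card = (C \ A).card := by
  rw [Finset.card_sdiff_of_subset hAB, Finset.card_sdiff_of_subset hBC, Finset.card_sdiff_of_subset (hAB.trans hBC)]
  have h1 := Finset.card_le_card hAB
  have h2 := Finset.card_le_card hBC
  omega

lemma sdiff_card_ne_zero {n : ℕ} {S J : Finset (Sym2 (Fin n))} (h : S ⊂ J) :
    (J \ S).card ≠ 0 := by
  simp only [ne_eq, Finset.card_eq_zero, Finset.sdiff_eq_empty_iff_subset]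
  exact fun hs => h.ne (le_antisymm h.subset hs)

lemma ratioAux_le {a₁ b₁ a₂ b₂ : ℕ} (hb1 : b₁ ≠ 0) (hb2 : b₂ ≠ 0)
    (hr : fdivAux b₁ a₁ ≤ fdivAux b₂ a₂) : (a₂ : ℝ) / b₂ ≤ (a₁ : ℝ) / b₁ := by
  rcases Nat.eq_zero_or_pos a₂ with ha2 | ha2
  · rw [ha2]
    simp only [Nat.cast_zero, zero_div]
    positivity
  rcases Nat.eq_zero_or_pos a₁ with ha1 | ha1
  · rw [ha1] at hr
    rw [show fdivAux b₁ 0 = ⊤ by simp [fdivAux], top_le_iff] at hr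
    exact absurd hr (fdivAux_ne_top (by omega))
  rw [fdivAux_le_fdivAux_iff ha1.ne' ha2.ne'] at hr
  rw [div_le_div_iff₀ (by positivity) (by positivity)]
  have : (a₂ * b₁ : ℕ) ≤ (a₁ * b₂ : ℕ) := by nlinarith
  exact_mod_cast this

lemma phiTerm_mono {n : ℕ} (hn : 2 ≤ n) {J₁ S₁ J₂ S₂ : Finset (Sym2 (Fin n))}
    (h1 : S₁ ⊂ J₁) (h2 : S₂ ⊂ J₂) (hr : rho J₁ S₁ ≤ rho J₂ S₂) :
    phiTerm n J₁ S₁ ≤ phiTerm n J₂ S₂ := by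
  have hb1 := sdiff_card_ne_zero h1
  have hb2 := sdiff_card_ne_zero h2
  rw [rho_eq_fdivAux, rho_eq_fdivAux] at hr
  have hn' : (1:ℝ) < n := by exact_mod_cast hn
  rw [phiTerm, phiTerm, Real.rpow_le_rpow_left_iff hn', neg_le_neg_iff]
  exact ratioAux_le hb1 hb2 hr

lemma rho_chain1 {n : ℕ} {A B C : Finset (Sym2 (Fin n))} (hAB : A ⊂ B) (hBC : B ⊂ C)
    (h : rho B A ≤ rho C A) : rho C A ≤ rho C B := by
  have e1 : (C \ A).card = (B \ A).card + (C \ B).card :=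
    (card_sdiff_chain hAB.subset hBC.subset).symm
  have e2 : (vertexSet C \ vertexSet A).card
      = (vertexSet B \ vertexSet A).card + (vertexSet C \ vertexSet B).card :=
    (card_sdiff_chain (vertexSet_mono hAB.subset) (vertexSet_mono hBC.subset)).symm
  simp only [rho_eq_fdivAux] at h ⊢
  rw [e1, e2] at h ⊢
  exact medAux1 (Nat.one_le_iff_ne_zero.mpr (sdiff_card_ne_zero hAB))
    (Nat.one_le_iff_ne_zero.mpr (sdiff_card_ne_zero hBC)) h

lemma rho_chain2 {n : ℕ} {A B C : Finset (Sym2 (Fin n))} (hAB : A ⊂ B) (hBC : B ⊂ C)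
    (h : rho C A ≤ rho B A) : rho C B ≤ rho B A := by
  have e1 : (C \ A).card = (B \ A).card + (C \ B).card :=
    (card_sdiff_chain hAB.subset hBC.subset).symm
  have e2 : (vertexSet C \ vertexSet A).card
      = (vertexSet B \ vertexSet A).card + (vertexSet C \ vertexSet B).card :=
    (card_sdiff_chain (vertexSet_mono hAB.subset) (vertexSet_mono hBC.subset)).symm
  simp only [rho_eq_fdivAux] at h ⊢
  rw [e1, e2] at h
  exact medAux2 (Nat.one_le_iff_ne_zero.mpr (sdiff_card_ne_zero hAB))
    (Nat.one_le_iff_ne_zero.mpr (sdiff_card_ne_zero hBC)) h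

lemma rho_union_ge {n : ℕ} (S C : Finset (Sym2 (Fin n))) :
    rho C (C ∩ S) ≤ rho (S ∪ C) S := by
  classical
  rw [rho_eq_fdivAux, rho_eq_fdivAux]
  have he : (S ∪ C) \ S = C \ (C ∩ S) := by
    ext e
    simp only [Finset.mem_sdiff, Finset.mem_union, Finset.mem_inter]
    tauto
  rw [he]
  apply fdivAux_anti
  apply Finset.card_le_card
  intro v hv
  rw [Finset.mem_sdiff] at hv ⊢
  rw [vertexSet_union, Finset.mem_union] at hv
  refine ⟨hv.1.resolve_left hv.2, fun hmem => hv.2 ?_⟩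
  exact vertexSet_mono Finset.inter_subset_right hmem


/-- Let `H` be a graph on `n` vertices with onion decomposition
`J^(0) ⊊ ⋯ ⊊ J^(M)`. For `q ∈ [0,1)`, if `t` is the index with
`|J^(t)|/|H| ≤ q < |J^(t+1)|/|H|`, then
`φ_q = n^(−|V(J^(t+1))\V(J^(t))| / |J^(t+1)\J^(t)|)`; that is, the pair
`(S, J) = (J^(t), J^(t+1))` is a minimax optimal pair in the definition of `φ_q`. -/
theorem phi_eq_onion_layer
    (n : ℕ) (H : Finset (Sym2 (Fin n))) (hH : H ⊆ edgeFinset n)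
    (M : ℕ) (J : ℕ → Finset (Sym2 (Fin n))) (hOnion : IsOnionDecomp n H M J)
    (q : ℝ) (hq0 : 0 ≤ q) (hq1 : q < 1)
    (t : ℕ) (ht : t < M)
    (h1 : ((J t).card : ℝ) / (H.card : ℝ) ≤ q)
    (h2 : q < ((J (t + 1)).card : ℝ) / (H.card : ℝ)) :
    phi n H q = phiTerm n (J (t + 1)) (J t) := by
  classical
  obtain ⟨hJ0, hJM, hstep⟩ := hOnion
  have hsub : ∀ s, s < M → J s ⊂ J (s + 1) := fun s hs => (hstep s hs).1
  have hsubH : ∀ s, s < M → J (s + 1) ⊆ H := fun s hs => (hstep s hs).2.1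
  have hmaxP : ∀ s, s < M → ∀ J', J s ⊂ J' → J' ⊆ H → rho J' (J s) ≤ rho (J (s + 1)) (J s) :=
    fun s hs => (hstep s hs).2.2.1
  have hJtH : J t ⊆ H := (hsub t ht).subset.trans (hsubH t ht)
  obtain ⟨e₀, he₀C, he₀t⟩ := Finset.exists_of_ssubset (hsub t ht)
  have he₀H : e₀ ∈ H := hsubH t ht he₀C
  have hHne : H.Nonempty := ⟨e₀, he₀H⟩
  have hHcard : (0:ℝ) < H.card := by exact_mod_cast Finset.card_pos.mpr hHne
  -- n ≥ 2
  have hn2 : 2 ≤ n := by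
    have := hH he₀H
    rw [edgeFinset, Finset.mem_filter] at this
    obtain ⟨-, hdiag⟩ := this
    induction e₀ using Sym2.ind with
    | _ x y =>
      rw [Sym2.mk_isDiag_iff] at hdiag
      have hxy : (x : ℕ) ≠ (y : ℕ) := fun h => hdiag (Fin.val_injective h)
      have h1 := x.isLt
      have h2 := y.isLt
      omega
  -- monotonicity of layer densities
  have hstepmono : ∀ s, s + 1 < M →
      rho (J (s + 2)) (J (s + 1)) ≤ rho (J (s + 1)) (J s) := by
    intro s hs
    have hA := hsub s (by omega)
    have hB := hsub (s + 1) hs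
    have hC : J (s + 2) ⊆ H := hsubH (s + 1) hs
    have hmax := hmaxP s (by omega) (J (s + 2)) (hA.trans hB) hC
    exact rho_chain2 hA hB hmax
  have hmonoD : ∀ d s, s + d ≤ t →
      rho (J (s + d + 1)) (J (s + d)) ≤ rho (J (s + 1)) (J s) := by
    intro d
    induction d with
    | zero => intro s _; exact le_refl _
    | succ d ih =>
      intro s hsd
      have h' : rho (J (s + d + 2)) (J (s + d + 1)) ≤ rho (J (s + d + 1)) (J (s + d)) :=
        hstepmono (s + d) (by omega)
      have h'' := ih s (by omega)
      calc rho (J (s + (d + 1) + 1)) (J (s + (d + 1)))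
          = rho (J (s + d + 2)) (J (s + d + 1)) := by ring_nf
        _ ≤ rho (J (s + d + 1)) (J (s + d)) := h'
        _ ≤ rho (J (s + 1)) (J s) := h''
  have hmono : ∀ s, s ≤ t → rho (J (t + 1)) (J t) ≤ rho (J (s + 1)) (J s) := by
    intro s hs
    have := hmonoD (t - s) s (by omega)
    rw [show s + (t - s) = t by omega] at this
    exact this
  set T := phiTerm n (J (t + 1)) (J t) with hT
  -- membership: S = J t is admissible and realizes T
  have memA : T ∈ {x : ℝ | ∃ S : Finset (Sym2 (Fin n)), S ⊆ H ∧
      (S.card : ℝ) ≤ q * (H.card : ℝ) ∧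
      x = sSup {y : ℝ | ∃ J' : Finset (Sym2 (Fin n)), S ⊂ J' ∧ J' ⊆ H ∧
        y = phiTerm n J' S}} := by
    refine ⟨J t, hJtH, (div_le_iff₀ hHcard).mp h1, ?_⟩
    refine (IsGreatest.csSup_eq ?_).symm
    constructor
    · exact ⟨J (t + 1), hsub t ht, hsubH t ht, rfl⟩
    · rintro y ⟨J', hJ'1, hJ'2, rfl⟩
      exact phiTerm_mono hn2 hJ'1 (hsub t ht) (hmaxP t ht J' hJ'1 hJ'2)
  -- lower bound
  have lb : ∀ x ∈ {x : ℝ | ∃ S : Finset (Sym2 (Fin n)), S ⊆ H ∧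
      (S.card : ℝ) ≤ q * (H.card : ℝ) ∧
      x = sSup {y : ℝ | ∃ J' : Finset (Sym2 (Fin n)), S ⊂ J' ∧ J' ⊆ H ∧
        y = phiTerm n J' S}}, T ≤ x := by
    rintro x ⟨S, hSH, hScard, rfl⟩
    have hq' : q * (H.card : ℝ) < ((J (t + 1)).card : ℝ) := (lt_div_iff₀ hHcard).mp h2
    have hcard : S.card < (J (t + 1)).card := by
      exact_mod_cast lt_of_le_of_lt hScard hq'
    have hnot : ¬ J (t + 1) ⊆ S := fun h =>
      absurd (Finset.card_le_card h) (by omega)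
    have hex : ∃ s, ¬ J (s + 1) ⊆ S := ⟨t, hnot⟩
    set s := Nat.find hex with hs_def
    have hs_spec : ¬ J (s + 1) ⊆ S := Nat.find_spec hex
    have hs_min : ∀ m, m < s → J (m + 1) ⊆ S := fun m hm =>
      not_not.mp (Nat.find_min hex hm)
    have hs_le : s ≤ t := Nat.find_min' hex hnot
    have hsM : s < M := lt_of_le_of_lt hs_le ht
    have hJsS : J s ⊆ S := by
      rcases Nat.eq_zero_or_pos s with h0 | h0
      · rw [h0, hJ0]; exact Finset.empty_subset S
      · obtain ⟨s', hs'⟩ := Nat.exists_eq_add_of_lt h0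
        rw [hs']
        simpa using hs_min s' (by omega)
    have hCH : J (s + 1) ⊆ H := hsubH s hsM
    have hDC : J (s + 1) ∩ S ⊂ J (s + 1) := by
      refine Finset.ssubset_iff_subset_ne.mpr ⟨Finset.inter_subset_left, fun h => ?_⟩
      exact hs_spec (fun e he => (Finset.mem_inter.mp (h ▸ he)).2)
    have hAD : J s ⊆ J (s + 1) ∩ S :=
      Finset.subset_inter (hsub s hsM).subset hJsS
    have key1 : rho (J (s + 1)) (J s) ≤ rho (J (s + 1)) (J (s + 1) ∩ S) := by
      by_cases hD : J s = J (s + 1) ∩ S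
      · rw [← hD]
      · have hAD' : J s ⊂ J (s + 1) ∩ S := Finset.ssubset_iff_subset_ne.mpr ⟨hAD, hD⟩
        have hDH : J (s + 1) ∩ S ⊆ H := Finset.inter_subset_left.trans hCH
        exact rho_chain1 hAD' hDC (hmaxP s hsM _ hAD' hDH)
    have key2 : rho (J (s + 1)) (J (s + 1) ∩ S) ≤ rho (S ∪ J (s + 1)) S :=
      rho_union_ge S (J (s + 1))
    have key3 : rho (J (t + 1)) (J t) ≤ rho (S ∪ J (s + 1)) S :=
      le_trans (le_trans (hmono s hs_le) key1) key2
    have hSS : S ⊂ S ∪ J (s + 1) := by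
      refine Finset.ssubset_iff_subset_ne.mpr ⟨Finset.subset_union_left, fun h => ?_⟩
      exact hs_spec (Finset.union_eq_left.mp h.symm)
    have hJH : S ∪ J (s + 1) ⊆ H := Finset.union_subset hSH hCH
    have hTle : T ≤ phiTerm n (S ∪ J (s + 1)) S :=
      phiTerm_mono hn2 (hsub t ht) hSS key3
    refine le_trans hTle (le_csSup ?_ ⟨S ∪ J (s + 1), hSS, hJH, rfl⟩)
    apply Set.Finite.bddAbove
    apply Set.Finite.subset (Set.finite_range (fun J' : Finset (Sym2 (Fin n)) => phiTerm n J' S))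
    rintro y ⟨J', -, -, rfl⟩
    exact ⟨J', rfl⟩
  rw [phi]
  exact le_antisymm (csInf_le ⟨T, lb⟩ memA) (le_csInf ⟨T, memA⟩ lb)

end
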